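/- Let n ≥ 2, d ≥ 2 and m = Nat.choose (n + d − 1) (d − 1). Let W be the span in EuclideanSpace ℂ (Fin n → Fin d) of all generalized Dicke states {D_n^{k} : k : Fin d → ℕ, ∑ a, k a = n}. Then the n-qudit space decomposes as the orthogonal direct sum of: (i) the span of the d coordinate basis vectors e_{(a,…,a)} for a : Fin d; (ii) the span of the generalized Dicke states with k a < n for all a, which has finrank m − d and all of whose nonzero vectors are GME; and (iii) the orthogonal complement Wᗮ, which has finrank d^n − m and contains no nonzero fully product vector. -/

import Mathlib

/-- The unnormalized generalized Dicke state of `n` qudits with excitation vector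
`k : Fin d → ℕ`. -/
noncomputable def genDicke (n d : ℕ) (k : Fin d → ℕ) :
    EuclideanSpace ℂ (Fin n → Fin d) :=
  WithLp.toLp 2 fun i => if ∀ a : Fin d, (Finset.univ.filter fun j => i j = a).card = k a then 1 else 0

/-- A vector of the `n`-qudit space is *fully product* if it is a simple tensor. -/
def FullyProduct {n d : ℕ} (ψ : EuclideanSpace ℂ (Fin n → Fin d)) : Prop :=
  ∃ φ : Fin n → Fin d → ℂ, ∀ i, ψ i = ∏ j, φ j (i j)

/-- `ψ` is biseparable across the bipartition `(S, Sᶜ)` of the `n` qudits. -/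
def Biseparable {n d : ℕ} (S : Set (Fin n))
    (ψ : EuclideanSpace ℂ (Fin n → Fin d)) : Prop :=
  ∃ (φ : ((j : S) → Fin d) → ℂ) (χ : ((j : ↥Sᶜ) → Fin d) → ℂ),
    ∀ i, ψ i = φ (fun j => i j.val) * χ (fun j => i j.val)

/-- A nonzero vector is genuinely multipartite entangled if it is not biseparable
across any nontrivial bipartition. -/
def GME {n d : ℕ} (ψ : EuclideanSpace ℂ (Fin n → Fin d)) : Prop :=
  ψ ≠ 0 ∧ ∀ S : Set (Fin n), S ≠ ∅ → S ≠ Set.univ → ¬ Biseparable S ψ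

/-!
Dicke states with distinct excitation vectors have disjoint supports, hence are orthogonal, and
counting excitation vectors gives the dimensions; the `e_{a…a}` are the Dicke states whose
excitation vector is concentrated in a single level.

A vector orthogonal to every Dicke state is killed by the Veronese map
`ψ ↦ ∑ᵢ ψᵢ x^{excitation i}`, which sends a product vector `⊗ⱼ φⱼ` to the product of the linear
forms `∑ₐ φⱼ(a) xₐ`; since polynomials form a domain, one of the factors vanishes.

If a symmetric vector factorises across a cut with `s ∈ S`, `t ∉ S`, its support is closed under
copying the entry at `s` onto any other position, so it contains a constant index `a…a`.
Vectors in the span of the Dicke states with all `k a < n` are symmetric and vanish there.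
-/
open Finset MvPolynomial

lemma finrank_orthogonal_euclideanSpace {𝕜 ι : Type*} [RCLike 𝕜] [Fintype ι]
    (W : Submodule 𝕜 (EuclideanSpace 𝕜 ι)) :
    Module.finrank 𝕜 Wᗮ = Fintype.card ι - Module.finrank 𝕜 W := by
  have := W.finrank_add_finrank_orthogonal
  rw [finrank_euclideanSpace] at this
  omega

section Qudits

variable {n d : ℕ}

def excitation (i : Fin n → Fin d) (a : Fin d) : ℕ := #{j | i j = a}

lemma sum_excitation (i : Fin n → Fin d) : ∑ a, excitation i a = n := by
  simpa [excitation] using (card_eq_sum_card_fiberwise (f := i) (s := univ) (t := univ)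
    fun _ _ => mem_univ _).symm

lemma excitation_comp_perm (i : Fin n → Fin d) (σ : Equiv.Perm (Fin n)) :
    excitation (i ∘ σ) = excitation i :=
  funext fun _ => card_equiv σ fun _ => by simp

lemma excitation_apply_eq_count (i : Fin n → Fin d) (a : Fin d) :
    excitation i a = (univ.val.map i).count a := by
  rw [excitation, Multiset.count_map, card, filter_val]
  simp_rw [eq_comm]

lemma exists_excitation_eq {k : Fin d → ℕ} (hk : ∑ a, k a = n) :
    ∃ i : Fin n → Fin d, excitation i = k := by
  -- `k` is the count vector of a multiset of size `n`; any enumeration of it will do.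
  set s := (Sym.equivNatSumOfFintype (Fin d) n).symm ⟨k, hk⟩
  obtain ⟨l, hl⟩ : ∃ l : List (Fin d), (l : Multiset (Fin d)) = s := Quot.exists_rep _
  have hlen : l.length = n := by rw [← Multiset.coe_card, hl]; exact s.2
  subst hlen
  refine ⟨l.get, funext fun a => ?_⟩
  have hs := Sym.coe_equivNatSumOfFintype_apply_apply (Fin d) l.length s a
  rw [Equiv.apply_symm_apply] at hs
  rw [excitation_apply_eq_count, Fin.univ_val_map, List.ofFn_get, hl]
  exact hs.symm

lemma excitation_const (a : Fin d) : excitation (fun _ : Fin n => a) = Pi.single a n := by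
  ext b
  rcases eq_or_ne b a with rfl | h
  · simp [excitation]
  · simp [excitation, h, Ne.symm h]

lemma excitation_eq_single_iff {i : Fin n → Fin d} {a : Fin d} :
    excitation i = Pi.single a n ↔ i = fun _ => a := by
  refine ⟨fun h => funext fun j => ?_, fun h => h ▸ excitation_const a⟩
  have : #{j | i j = a} = n := by simpa [excitation] using congrFun h a
  simpa using (filter_eq_self.mp (eq_univ_of_card _ (by simpa using this))) j (mem_univ j)

lemma genDicke_apply (k : Fin d → ℕ) (i : Fin n → Fin d) :
    genDicke n d k i = if excitation i = k then 1 else 0 := by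
  simp [genDicke, excitation, funext_iff]

lemma genDicke_ne_zero {k : Fin d → ℕ} (hk : ∑ a, k a = n) : genDicke n d k ≠ 0 := by
  obtain ⟨i, hi⟩ := exists_excitation_eq hk
  intro h
  simpa [genDicke_apply, hi] using congrArg (· i) h

lemma genDicke_eq_zero {k : Fin d → ℕ} (hk : ∑ a, k a ≠ n) : genDicke n d k = 0 := by
  ext i
  rw [genDicke_apply, if_neg fun h : excitation i = k => hk (h ▸ sum_excitation i)]
  rfl

lemma genDicke_single (a : Fin d) :
    genDicke n d (Pi.single a n) = EuclideanSpace.single (fun _ => a) 1 := by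
  ext i
  simp [genDicke_apply, excitation_eq_single_iff]

lemma inner_genDicke_left (k : Fin d → ℕ) (ψ : EuclideanSpace ℂ (Fin n → Fin d)) :
    inner ℂ (genDicke n d k) ψ = ∑ i, if excitation i = k then ψ i else 0 := by
  simp [PiLp.inner_apply, genDicke_apply]

lemma inner_genDicke_genDicke_of_ne {k k' : Fin d → ℕ} (h : k ≠ k') :
    inner ℂ (genDicke n d k) (genDicke n d k') = 0 := by
  rw [inner_genDicke_left]
  refine sum_eq_zero fun i _ => ?_
  split_ifs with hi
  · rw [genDicke_apply, if_neg (hi ▸ h)]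
  · rfl

lemma isOrtho_span_genDicke {K K' : Set (Fin d → ℕ)} (h : Disjoint K K') :
    (Submodule.span ℂ (genDicke n d '' K)) ⟂ (Submodule.span ℂ (genDicke n d '' K')) := by
  rw [Submodule.isOrtho_span]
  rintro _ ⟨k, hk, rfl⟩ _ ⟨k', hk', rfl⟩
  exact inner_genDicke_genDicke_of_ne (h.ne_of_mem hk hk')

lemma finrank_span_genDicke (K : Finset (Fin d → ℕ)) (hK : ∀ k ∈ K, ∑ a, k a = n) :
    Module.finrank ℂ (Submodule.span ℂ (genDicke n d '' K)) = #K := by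
  have hli : LinearIndependent ℂ fun k : (K : Set (Fin d → ℕ)) => genDicke n d k :=
    linearIndependent_of_ne_zero_of_inner_eq_zero (fun k => genDicke_ne_zero (hK k k.2))
      fun k k' h => inner_genDicke_genDicke_of_ne (Subtype.coe_ne_coe.mpr h)
  rw [Set.image_eq_range, finrank_span_eq_card hli]
  simp

lemma Finset.Nat.card_antidiagonalTuple (hd : d ≠ 0) :
    #(Nat.antidiagonalTuple d n) = (n + d - 1).choose (d - 1) := by
  have e : Nat.antidiagonalTuple d n ≃ Sym (Fin d) n :=
    (Equiv.subtypeEquivRight fun _ => Nat.mem_antidiagonalTuple).trans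
      (Sym.equivNatSumOfFintype (Fin d) n).symm
  rw [← Fintype.card_coe, Fintype.card_congr e, Sym.card_sym_eq_choose, Fintype.card_fin,
    add_comm d n, Nat.choose_symm_of_eq_add]
  omega

lemma eq_single_of_sum_eq_of_le {ι : Type*} [Fintype ι] [DecidableEq ι] {k : ι → ℕ}
    (hk : ∑ a, k a = n) {a : ι} (ha : n ≤ k a) : k = Pi.single a n := by
  have hrest : ∑ b ∈ univ.erase a, k b = 0 := by
    have := add_sum_erase univ k (mem_univ a)
    omega
  ext b
  rcases eq_or_ne b a with rfl | hb
  · have := single_le_sum (fun b _ => Nat.zero_le (k b)) (mem_univ b) (f := k)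
    simp only [Pi.single_eq_same]
    omega
  · rw [Pi.single_eq_of_ne hb]
    exact sum_eq_zero_iff.mp hrest b (mem_erase.mpr ⟨hb, mem_univ b⟩)

lemma Finset.Nat.filter_not_forall_lt_antidiagonalTuple :
    (Nat.antidiagonalTuple d n).filter (fun k => ¬ ∀ a, k a < n) =
      univ.image fun a => Pi.single a n := by
  ext k
  simp only [mem_filter, Nat.mem_antidiagonalTuple, mem_image, mem_univ, true_and, not_forall,
    not_lt]
  constructor
  · rintro ⟨hk, a, ha⟩
    exact ⟨a, (eq_single_of_sum_eq_of_le hk ha).symm⟩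
  · rintro ⟨a, rfl⟩
    exact ⟨by simp, a, by simp⟩

lemma Finset.Nat.card_filter_forall_lt_antidiagonalTuple (hn : n ≠ 0) :
    #((Nat.antidiagonalTuple d n).filter fun k => ∀ a, k a < n) =
      #(Nat.antidiagonalTuple d n) - d := by
  have hsingle : Function.Injective fun a : Fin d => (Pi.single a n : Fin d → ℕ) :=
    fun a b h => by_contra fun hab => by simpa [hab, hn] using congrFun h a
  rw [← card_filter_add_card_filter_not (s := antidiagonalTuple d n) (fun k => ∀ a, k a < n),
    filter_not_forall_lt_antidiagonalTuple, card_image_of_injective _ hsingle]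
  simp

noncomputable def veronese (ψ : EuclideanSpace ℂ (Fin n → Fin d)) : MvPolynomial (Fin d) ℂ :=
  ∑ i, monomial (Finsupp.equivFunOnFinite.symm (excitation i)) (ψ i)

lemma prod_X_eq_monomial_excitation {R : Type*} [CommSemiring R] (i : Fin n → Fin d) :
    ∏ j, (X (i j) : MvPolynomial (Fin d) R) =
      monomial (Finsupp.equivFunOnFinite.symm (excitation i)) 1 := by
  have hsum : ∑ j, Finsupp.single (i j) 1 = Finsupp.equivFunOnFinite.symm (excitation i) := by
    ext a
    simp only [Finsupp.finsetSum_apply, Finsupp.single_apply, Finsupp.coe_equivFunOnFinite_symm,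
      excitation, card_filter]
  rw [← hsum, monomial_sum_one]
  rfl

lemma coeff_veronese (ψ : EuclideanSpace ℂ (Fin n → Fin d)) (μ : Fin d →₀ ℕ) :
    (veronese ψ).coeff μ = inner ℂ (genDicke n d μ) ψ := by
  simp [veronese, coeff_sum, coeff_monomial, inner_genDicke_left, Finsupp.ext_iff, funext_iff]

lemma veronese_eq_zero {ψ : EuclideanSpace ℂ (Fin n → Fin d)}
    (hψ : ∀ k : Fin d → ℕ, ∑ a, k a = n → inner ℂ (genDicke n d k) ψ = 0) :
    veronese ψ = 0 := by
  ext μ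
  rw [coeff_veronese, coeff_zero]
  by_cases hμ : ∑ a, μ a = n
  · exact hψ μ hμ
  · rw [genDicke_eq_zero hμ, inner_zero_left]

lemma veronese_eq_prod {ψ : EuclideanSpace ℂ (Fin n → Fin d)} {φ : Fin n → Fin d → ℂ}
    (hφ : ∀ i, ψ i = ∏ j, φ j (i j)) :
    veronese ψ = ∏ j, ∑ a, C (φ j a) * X a := by
  rw [prod_univ_sum, Fintype.piFinset_univ, veronese]
  refine sum_congr rfl fun i _ => ?_
  rw [prod_mul_distrib, ← map_prod, prod_X_eq_monomial_excitation, C_mul_monomial, mul_one, hφ]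

lemma eq_zero_of_sum_C_mul_X_eq_zero {σ R : Type*} [Fintype σ] [CommSemiring R] {c : σ → R}
    (h : ∑ a, C (c a) * X a = (0 : MvPolynomial σ R)) : c = 0 := by
  classical
  ext a
  simpa [coeff_sum, coeff_X, Finsupp.single_left_inj] using
    congrArg (coeff (Finsupp.single a 1)) h

lemma FullyProduct.eq_zero_of_veronese_eq_zero {ψ : EuclideanSpace ℂ (Fin n → Fin d)}
    (hψ : FullyProduct ψ) (h : veronese ψ = 0) : ψ = 0 := by
  obtain ⟨φ, hφ⟩ := hψ
  obtain ⟨j, -, hj⟩ := prod_eq_zero_iff.mp ((veronese_eq_prod hφ).symm.trans h)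
  ext i
  rw [hφ]
  exact prod_eq_zero (mem_univ j) (congrFun (eq_zero_of_sum_C_mul_X_eq_zero hj) (i j))

def symmetricSubspace (n d : ℕ) : Submodule ℂ (EuclideanSpace ℂ (Fin n → Fin d)) where
  carrier := {ψ | ∀ (σ : Equiv.Perm (Fin n)) i, ψ (i ∘ σ) = ψ i}
  add_mem' hψ hφ σ i := by simp [hψ σ i, hφ σ i]
  zero_mem' _ _ := rfl
  smul_mem' c ψ hψ σ i := by simp [hψ σ i]

lemma genDicke_mem_symmetricSubspace (k : Fin d → ℕ) : genDicke n d k ∈ symmetricSubspace n d :=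
  fun σ i => by simp only [genDicke_apply, excitation_comp_perm]

lemma span_genDicke_le_symmetricSubspace (K : Set (Fin d → ℕ)) :
    Submodule.span ℂ (genDicke n d '' K) ≤ symmetricSubspace n d :=
  Submodule.span_le.mpr (Set.image_subset_iff.mpr fun k _ => genDicke_mem_symmetricSubspace k)

section Biseparable

variable {ψ : EuclideanSpace ℂ (Fin n → Fin d)} {S : Set (Fin n)}

lemma Biseparable.apply_piecewise_ne_zero [DecidablePred (· ∈ S)] (h : Biseparable S ψ)
    {x y : Fin n → Fin d} (hx : ψ x ≠ 0) (hy : ψ y ≠ 0) : ψ (S.piecewise x y) ≠ 0 := by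
  obtain ⟨φ, χ, hψ⟩ := h
  rw [hψ] at hx hy ⊢
  have hS : (fun j : S => S.piecewise x y j) = fun j : S => x j :=
    funext fun j => S.piecewise_eq_of_mem _ _ j.2
  have hSc : (fun j : ↥Sᶜ => S.piecewise x y j) = fun j : ↥Sᶜ => y j :=
    funext fun j => S.piecewise_eq_of_notMem _ _ j.2
  rw [hS, hSc]
  exact mul_ne_zero (left_ne_zero_of_mul hx) (right_ne_zero_of_mul hy)

lemma Biseparable.apply_update_ne_zero (h : Biseparable S ψ) (hsym : ψ ∈ symmetricSubspace n d)
    {s t : Fin n} (hs : s ∈ S) (ht : t ∉ S) {x : Fin n → Fin d} (hx : ψ x ≠ 0) (l : Fin n) :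
    ψ (Function.update x l (x s)) ≠ 0 := by
  classical
  have hst : s ≠ t := fun hst => ht (hst ▸ hs)
  have hcopy : ∀ y : Fin n → Fin d, ψ y ≠ 0 → ψ (Function.update y t (y s)) ≠ 0 := by
    intro y hy
    have hmix : S.piecewise y (y ∘ Equiv.swap s t) = Function.update y t (y s) := by
      funext j
      by_cases hj : j ∈ S
      · have : j ≠ t := fun hjt => ht (hjt ▸ hj)
        simp [hj, this]
      · have : j ≠ s := fun hjs => hj (hjs ▸ hs)
        by_cases hjt : j = t
        · simp [hjt, ht]
        · simp [hj, this, hjt, Equiv.swap_apply_of_ne_of_ne]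
    rw [← hmix]
    exact h.apply_piecewise_ne_zero hy (by rwa [hsym])
  rcases eq_or_ne l s with rfl | hls
  · rwa [Function.update_eq_self]
  set τ := Equiv.swap t l
  have hτs : x (τ s) = x s := by rw [Equiv.swap_apply_of_ne_of_ne hst (Ne.symm hls)]
  have hconj : Function.update x l (x s) ∘ τ = Function.update (x ∘ τ) t ((x ∘ τ) s) := by
    rw [Function.update_comp_equiv, Function.comp_apply, hτs, Equiv.symm_swap,
      Equiv.swap_apply_right]
  rw [← hsym τ, hconj]
  exact hcopy _ (by rwa [hsym])

lemma Biseparable.apply_const_ne_zero (h : Biseparable S ψ) (hsym : ψ ∈ symmetricSubspace n d)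
    {s t : Fin n} (hs : s ∈ S) (ht : t ∉ S) {x : Fin n → Fin d} (hx : ψ x ≠ 0) :
    ψ (fun _ => x s) ≠ 0 := by
  classical
  have key : ∀ T : Finset (Fin n), ψ (T.piecewise (fun _ => x s) x) ≠ 0 := by
    intro T
    induction T using Finset.induction_on with
    | empty => simpa using hx
    | insert l T _ ih =>
      have hs' : T.piecewise (fun _ => x s) x s = x s := by
        by_cases hsT : s ∈ T <;> simp [hsT]
      rw [piecewise_insert]
      simpa only [hs'] using h.apply_update_ne_zero hsym hs ht ih l
  simpa using key univ

end Biseparable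

lemma gme_of_mem_symmetricSubspace {ψ : EuclideanSpace ℂ (Fin n → Fin d)}
    (hsym : ψ ∈ symmetricSubspace n d)
    (hdiag : ψ ∈ (Submodule.span ℂ
      (Set.range fun a : Fin d => EuclideanSpace.single (fun _ : Fin n => a) (1 : ℂ)))ᗮ)
    (hψ : ψ ≠ 0) : GME ψ := by
  refine ⟨hψ, fun S hS hS' h => ?_⟩
  obtain ⟨x, hx⟩ : ∃ x, ψ x ≠ 0 := by
    by_contra! hzero
    exact hψ (PiLp.ext hzero)
  obtain ⟨s, hs⟩ := Set.nonempty_iff_ne_empty.mpr hS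
  obtain ⟨t, ht⟩ := Set.nonempty_compl.mpr hS'
  refine h.apply_const_ne_zero hsym hs ht hx ?_
  have hdiag_apply := Submodule.inner_right_of_mem_orthogonal
    (Submodule.subset_span (Set.mem_range_self (x s))) hdiag
  simpa [EuclideanSpace.inner_single_left] using hdiag_apply


end Qudits

/-- Theorem 4: the `n`-qudit Hilbert space decomposes as the orthogonal direct sum
`span{|a…a⟩ : a} ⊕ GES_{m−d} ⊕ CES_{d^n − m}`. -/
theorem nqudit_veronese_decomposition (n d : ℕ) (hn : 2 ≤ n) (hd : 2 ≤ d)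
    (m : ℕ) (hm : m = Nat.choose (n + d - 1) (d - 1))
    (W : Submodule ℂ (EuclideanSpace ℂ (Fin n → Fin d)))
    (hW : W = Submodule.span ℂ
        {v | ∃ k : Fin d → ℕ, (∑ a, k a) = n ∧ v = genDicke n d k})
    (A : Submodule ℂ (EuclideanSpace ℂ (Fin n → Fin d)))
    (hA : A = Submodule.span ℂ
        (Set.range fun a : Fin d => EuclideanSpace.single (fun _ => a) (1 : ℂ)))
    (B : Submodule ℂ (EuclideanSpace ℂ (Fin n → Fin d)))
    (hB : B = Submodule.span ℂ
        {v | ∃ k : Fin d → ℕ, (∑ a, k a) = n ∧ (∀ a, k a < n) ∧ v = genDicke n d k}) :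
    Submodule.IsOrtho A B ∧ Submodule.IsOrtho A Wᗮ ∧ Submodule.IsOrtho B Wᗮ ∧
    A ⊔ B ⊔ Wᗮ = ⊤ ∧
    Module.finrank ℂ ↥B = m - d ∧
    (∀ ψ ∈ B, ψ ≠ 0 → GME ψ) ∧
    Module.finrank ℂ ↥(Wᗮ) = d ^ n - m ∧
    (∀ ψ ∈ Wᗮ, FullyProduct ψ → ψ = 0) := by
  set K := Nat.antidiagonalTuple d n
  have hW' : W = Submodule.span ℂ (genDicke n d '' K) := by
    rw [hW]; congr 1; ext v; simp [K, Nat.mem_antidiagonalTuple, @eq_comm _ v]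
  have hB' : B = Submodule.span ℂ (genDicke n d '' ↑(K.filter fun k => ∀ a, k a < n)) := by
    rw [hB]; congr 1; ext v; simp [K, Nat.mem_antidiagonalTuple, @eq_comm _ v, and_assoc]
  have hA' : A = Submodule.span ℂ (genDicke n d '' ↑(K.filter fun k => ¬ ∀ a, k a < n)) := by
    rw [hA, Nat.filter_not_forall_lt_antidiagonalTuple, coe_image, coe_univ, Set.image_univ,
      ← Set.range_comp]
    simp_rw [Function.comp_def, genDicke_single]
  have hAB : A ⟂ B := hA' ▸ hB' ▸ isOrtho_span_genDicke
    (disjoint_coe.mpr (disjoint_filter_filter_not K K _).symm)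
  have hsup : A ⊔ B = W := by
    rw [hA', hB', hW', ← Submodule.span_union, ← Set.image_union, ← coe_union, union_comm,
      filter_union_filter_not_eq]
  refine ⟨hAB, W.isOrtho_orthogonal_right.mono_left (hsup ▸ le_sup_left),
    W.isOrtho_orthogonal_right.mono_left (hsup ▸ le_sup_right),
    hsup ▸ Submodule.sup_orthogonal_of_hasOrthogonalProjection, ?_,
    fun ψ hψ hψ0 => gme_of_mem_symmetricSubspace
      (span_genDicke_le_symmetricSubspace _ (hB' ▸ hψ)) (hA ▸ hAB.symm.le hψ) hψ0, ?_,
    fun ψ hψ hprod => hprod.eq_zero_of_veronese_eq_zero (veronese_eq_zero fun k hk =>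
      Submodule.inner_right_of_mem_orthogonal
        (hW ▸ Submodule.subset_span ⟨k, hk, rfl⟩) hψ)⟩
  · rw [hB', finrank_span_genDicke _ fun k hk => Nat.mem_antidiagonalTuple.mp (mem_filter.mp hk).1,
      Nat.card_filter_forall_lt_antidiagonalTuple (by omega),
      Nat.card_antidiagonalTuple (by omega), hm]
  · rw [finrank_orthogonal_euclideanSpace, hW',
      finrank_span_genDicke K fun k => Nat.mem_antidiagonalTuple.mp,
      Nat.card_antidiagonalTuple (by omega), hm]
    simp
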